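/- Let vcc be real and g1, g2, s > 0. If the characteristic f(v) = g2·(vcc − clamp_{[0,s]}(g1·(v − 0.6))) + g3·v attains a local maximum or a local minimum at some point v0 ∈ ℝ, then necessarily g1·g2 ≥ g3 (this is the paper's necessary condition for non-monotonicity of the circuit's characteristic). -/
import Mathlib

open Topology Filter


/-- The clamp (metric projection onto `[0, s]`) function. -/
noncomputable def clamp (s v : ℝ) : ℝ := min (max v 0) s

/-- The non-monotone circuit characteristic, eq. (5) of the paper. -/
noncomputable def nonMonotone (vcc g1 g2 g3 s v : ℝ) : ℝ :=
  g2 * (vcc - clamp s (g1 * (v - 0.6))) + g3 * v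

lemma clamp_mono (s : ℝ) {a b : ℝ} (h : a ≤ b) : clamp s a ≤ clamp s b := by
  unfold clamp
  exact min_le_min (max_le_max h le_rfl) le_rfl

lemma clamp_lip (s : ℝ) {a b : ℝ} (h : a ≤ b) : clamp s b - clamp s a ≤ b - a := by
  unfold clamp
  rcases le_total a 0 with h1 | h1 <;> rcases le_total b 0 with h2 | h2 <;>
    rcases le_total a s with h3 | h3 <;> rcases le_total b s with h4 | h4 <;>
    simp [min_def, max_def] <;> split_ifs <;> linarith

/-- if the characteristic attains a local maximum or a local minimum at some
point `v0`, then necessarily `g1·g2 ≥ g3`. -/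
theorem stmt3 (vcc g1 g2 g3 s : ℝ) (hg1 : 0 < g1) (hg2 : 0 < g2) (hs : 0 < s)
    (v0 : ℝ)
    (h : IsLocalMax (nonMonotone vcc g1 g2 g3 s) v0 ∨
         IsLocalMin (nonMonotone vcc g1 g2 g3 s) v0) :
    g1 * g2 ≥ g3 := by
  by_contra hlt
  push_neg at hlt
  have smono : StrictMono (nonMonotone vcc g1 g2 g3 s) := by
    intro a b hab
    unfold nonMonotone
    have hargs : g1 * (a - 0.6) ≤ g1 * (b - 0.6) := by nlinarith
    have h1 := clamp_mono s hargs
    have h2 := clamp_lip s hargs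
    nlinarith [mul_le_mul_of_nonneg_left h2 hg2.le,
      mul_le_mul_of_nonneg_left h1 hg2.le]
  rcases h with h | h
  · have h1 : ∀ᶠ x in 𝓝[>] v0, nonMonotone vcc g1 g2 g3 s x ≤
        nonMonotone vcc g1 g2 g3 s v0 := h.filter_mono nhdsWithin_le_nhds
    have h2 : ∀ᶠ x in 𝓝[>] v0, x ∈ Set.Ioi v0 := self_mem_nhdsWithin
    obtain ⟨x, hx1, hx2⟩ := (h1.and h2).exists
    exact absurd hx1 (not_le.mpr (smono hx2))
  · have h1 : ∀ᶠ x in 𝓝[<] v0, nonMonotone vcc g1 g2 g3 s v0 ≤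
        nonMonotone vcc g1 g2 g3 s x := h.filter_mono nhdsWithin_le_nhds
    have h2 : ∀ᶠ x in 𝓝[<] v0, x ∈ Set.Iio v0 := self_mem_nhdsWithin
    obtain ⟨x, hx1, hx2⟩ := (h1.and h2).exists
    exact absurd hx1 (not_le.mpr (smono hx2))
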